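/- Identification of the limit before impact, case ḣ₀ < 0 (Lemma 3.6(ii)): Assume (B1), (B2), (D1), (D2), b(0) = 0, initial data ξ₀ = ξ̇₀ = 0, h₀ > 0, ḣ₀ < 0, and set t₀ := −h₀/ḣ₀. Let μ_n → 0⁺, let (h_n, ξ_n) be the corresponding global solutions of (gf), and suppose h_n → h and ξ_n → ξ uniformly on compact subsets of [0,∞). Then h(t) = h₀ + ḣ₀·t and ξ(t) = 0 for every t ∈ [0, t₀]. -/

import Mathlib

open Real Filter Set MeasureTheory Metric

noncomputable section

/-- The potential `B(y) = ∫₀^y b(w) dw` of the elastic response `b`. -/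
def potB (b : ℝ → ℝ) (y : ℝ) : ℝ := ∫ w in (0:ℝ)..y, b w

/-- (B1): `b` is locally Lipschitz continuous. -/
def HypB1 (b : ℝ → ℝ) : Prop := LocallyLipschitz b

/-- (B2): the potential `B` is coercive, i.e. `B(y) → ∞` as `|y| → ∞`. -/
def HypB2 (b : ℝ → ℝ) : Prop := Tendsto (potB b) (cocompact ℝ) atTop

/-- (B3): the potential `B` is nonnegative. -/
def HypB3 (b : ℝ → ℝ) : Prop := ∀ y : ℝ, 0 ≤ potB b y

/-- (B4): `b(y)·y > 0` for all `y ≠ 0`. -/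
def HypB4 (b : ℝ → ℝ) : Prop := ∀ y : ℝ, y ≠ 0 → 0 < b y * y

/-- The drag factor `𝒟` maps `(0,∞) × ℝ` into `(0,∞)`. -/
def HypDpos (D : ℝ → ℝ → ℝ) : Prop := ∀ x ξ : ℝ, 0 < x → 0 < D x ξ

/-- (D1): `𝒟` is locally Lipschitz continuous on `(0,∞) × ℝ`. -/
def HypD1 (D : ℝ → ℝ → ℝ) : Prop :=
  ∀ p : ℝ × ℝ, 0 < p.1 → ∃ ε > 0, ∃ L : NNReal,
    LipschitzOnWith L (fun q : ℝ × ℝ => D q.1 q.2)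
      (Metric.ball p ε ∩ {q : ℝ × ℝ | 0 < q.1})

/-- (D2): singular lower bound `𝒟(h,ξ) ≥ c·h^(−α)`, uniformly in `ξ`. -/
def HypD2 (D : ℝ → ℝ → ℝ) (c α : ℝ) : Prop :=
  0 < c ∧ 1 ≤ α ∧ ∀ x ξ : ℝ, 0 < x → c * x ^ (-α) ≤ D x ξ

/-- (D3): `𝒟(h,ξ) = g(h)·h^(−α)` with `g : (0,∞) → [C₁,C₂]` locally Lipschitz. -/
def HypD3 (D : ℝ → ℝ → ℝ) (g : ℝ → ℝ) (C₁ C₂ α : ℝ) : Prop :=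
  0 < C₁ ∧ C₁ ≤ C₂ ∧ 1 ≤ α ∧
  (∀ x : ℝ, 0 < x → ∃ ε > 0, ∃ L : NNReal,
      LipschitzOnWith L g (Metric.ball x ε ∩ Set.Ioi 0)) ∧
  (∀ x : ℝ, 0 < x → g x ∈ Set.Icc C₁ C₂) ∧
  (∀ x ξ : ℝ, 0 < x → D x ξ = g x * x ^ (-α))

/-- (D4): `ξ ↦ 𝒟(h,ξ)` is nondecreasing for every `h > 0`. -/
def HypD4 (D : ℝ → ℝ → ℝ) : Prop :=
  ∀ x : ℝ, 0 < x → ∀ ξ₁ ξ₂ : ℝ, ξ₁ ≤ ξ₂ → D x ξ₁ ≤ D x ξ₂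

/-- (D5): `𝒟(h,−δ₁) ≥ c₁·h^(−γ₁)` with `γ₁ ≥ α`. -/
def HypD5 (D : ℝ → ℝ → ℝ) (α δ₁ c₁ γ₁ : ℝ) : Prop :=
  0 < δ₁ ∧ 0 < c₁ ∧ α ≤ γ₁ ∧ ∀ x : ℝ, 0 < x → c₁ * x ^ (-γ₁) ≤ D x (-δ₁)

/-- (D6): `𝒟(h,−δ₂) ≤ γ(h)·h^(−γ₁)` with `∫₀^h γ(y)/y dy → 0` as `h → 0⁺`. -/
def HypD6 (D : ℝ → ℝ → ℝ) (γ₁ δ₂ : ℝ) (γfun : ℝ → ℝ) : Prop :=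
  0 < δ₂ ∧ (∀ y : ℝ, 0 < y → 0 ≤ γfun y) ∧
  Tendsto (fun x : ℝ => ∫ y in (0:ℝ)..x, γfun y / y)
    (nhdsWithin 0 (Set.Ioi 0)) (nhds 0) ∧
  ∀ x : ℝ, 0 < x → D x (-δ₂) ≤ γfun x * x ^ (-γ₁)

/-- A global solution of the reduced system (gf) on `[0,∞)`:
`h, ξ` twice differentiable, `h > 0`, satisfying
`ḧ − ξ̈ = a·b(ξ)` and `ḧ = −b(ξ) − μ·𝒟(h,ξ)·ḣ`, with the given initial data. -/
def IsGlobalSolution (a μ : ℝ) (b : ℝ → ℝ) (D : ℝ → ℝ → ℝ)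
    (h0 hd0 ξ0 ξd0 : ℝ) (h ξ : ℝ → ℝ) : Prop :=
  (∀ t : ℝ, 0 ≤ t → 0 < h t) ∧
  (∀ t : ℝ, 0 ≤ t → DifferentiableAt ℝ h t ∧ DifferentiableAt ℝ (deriv h) t ∧
    DifferentiableAt ℝ ξ t ∧ DifferentiableAt ℝ (deriv ξ) t) ∧
  (∀ t : ℝ, 0 ≤ t → deriv (deriv h) t - deriv (deriv ξ) t = a * b (ξ t)) ∧
  (∀ t : ℝ, 0 ≤ t →
    deriv (deriv h) t = - b (ξ t) - μ * D (h t) (ξ t) * deriv h t) ∧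
  h 0 = h0 ∧ deriv h 0 = hd0 ∧ ξ 0 = ξ0 ∧ deriv ξ 0 = ξd0

/-- A solution of the nonlinear oscillator `ξ̈ + a·b(ξ) = 0` on `(t₀,∞)`
with `ξ(t₀) = 0` and `ξ̇(t₀) = v₀` (right derivative at `t₀`). -/
def IsOscSolution (a t₀ v₀ : ℝ) (b : ℝ → ℝ) (ψ : ℝ → ℝ) : Prop :=
  ψ t₀ = 0 ∧
  HasDerivWithinAt ψ v₀ (Set.Ici t₀) t₀ ∧
  ContinuousOn ψ (Set.Ici t₀) ∧
  Tendsto (deriv ψ) (nhdsWithin t₀ (Set.Ioi t₀)) (nhds v₀) ∧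
  ∀ t : ℝ, t₀ < t → DifferentiableAt ℝ ψ t ∧ DifferentiableAt ℝ (deriv ψ) t ∧
    deriv (deriv ψ) t + a * b (ψ t) = 0

/-!
While `h₀ + ḣ₀ t > 0`, the free flight `(h₀ + ḣ₀ t, 0)` stays a positive distance away from
the contact `h = 0`, so near it the drag `𝒟` is bounded and `b` is Lipschitz with `b 0 = 0`.
The deviation of a solution from the free flight then satisfies a linear differential
inequality with forcing `O(μ)`, as long as the deviation itself is small. A Grönwall barrier
argument needs the estimate only at the first time the deviation could reach the barrier, so it
shows that the deviation stays `O(μ)` on `[0, T]` for every `T < t₀`. Letting `μₙ → 0`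
identifies the limit on `[0, t₀)`, and the continuity of the uniform limit extends this to `t₀`.
-/

open scoped Topology

lemma exists_norm_le_mul_norm_of_locallyLipschitz {E F : Type*} [SeminormedAddCommGroup E]
    [SeminormedAddCommGroup F] {f : E → F} (hf : LocallyLipschitz f) (hf0 : f 0 = 0) :
    ∃ r > 0, ∃ L ≥ 0, ∀ y, ‖y‖ ≤ r → ‖f y‖ ≤ L * ‖y‖ := by
  obtain ⟨K, U, hU, hK⟩ := hf 0
  obtain ⟨r, hr, hball⟩ := Metric.mem_nhds_iff.1 hU
  refine ⟨r / 2, half_pos hr, K, K.2, fun y hy => ?_⟩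
  have hyU : y ∈ U := hball (by rw [mem_ball_zero_iff]; linarith)
  simpa [hf0] using hK.norm_sub_le hyU (mem_of_mem_nhds hU)

lemma HypD1.continuousOn {D : ℝ → ℝ → ℝ} (hD1 : HypD1 D) :
    ContinuousOn (fun q : ℝ × ℝ => D q.1 q.2) {q | 0 < q.1} := by
  intro p hp
  obtain ⟨ε, hε, L, hL⟩ := hD1 p hp
  exact (hL.continuousOn.continuousAt (inter_mem (ball_mem_nhds p hε)
    ((isOpen_lt continuous_const continuous_fst).mem_nhds hp))).continuousWithinAt

/-- The sup norm of `(ℝ × ℝ) × (ℝ × ℝ)` bounds each of the four components at once. -/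
def freeFlightDeviation (h0 hd0 : ℝ) (h ξ : ℝ → ℝ) (t : ℝ) : (ℝ × ℝ) × (ℝ × ℝ) :=
  ((ξ t, deriv ξ t), (h t - (h0 + hd0 * t), deriv h t - hd0))

namespace IsGlobalSolution

variable {a μ : ℝ} {b : ℝ → ℝ} {D : ℝ → ℝ → ℝ} {h0 hd0 ξ0 ξd0 : ℝ} {h ξ : ℝ → ℝ}

lemma continuousOn_h (hsol : IsGlobalSolution a μ b D h0 hd0 ξ0 ξd0 h ξ) :
    ContinuousOn h (Ici 0) :=
  fun t ht => (hsol.2.1 t ht).1.continuousAt.continuousWithinAt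

lemma continuousOn_ξ (hsol : IsGlobalSolution a μ b D h0 hd0 ξ0 ξd0 h ξ) :
    ContinuousOn ξ (Ici 0) :=
  fun t ht => (hsol.2.1 t ht).2.2.1.continuousAt.continuousWithinAt

lemma freeFlightDeviation_zero (hsol : IsGlobalSolution a μ b D h0 hd0 0 0 h ξ) :
    freeFlightDeviation h0 hd0 h ξ 0 = 0 := by
  obtain ⟨-, -, -, -, hh, hh', hξ, hξ'⟩ := hsol
  simp [freeFlightDeviation, hh, hh', hξ, hξ']

lemma hasDerivAt_freeFlightDeviation (hsol : IsGlobalSolution a μ b D h0 hd0 ξ0 ξd0 h ξ)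
    {t : ℝ} (ht : 0 ≤ t) :
    HasDerivAt (freeFlightDeviation h0 hd0 h ξ)
      ((deriv ξ t, deriv (deriv ξ) t), (deriv h t - hd0, deriv (deriv h) t)) t := by
  obtain ⟨hh, hh', hξ, hξ'⟩ := hsol.2.1 t ht
  have hlin : HasDerivAt (fun s => h0 + hd0 * s) hd0 t := by
    simpa using ((hasDerivAt_id t).const_mul hd0).const_add h0
  exact (hξ.hasDerivAt.prodMk hξ'.hasDerivAt).prodMk
    ((hh.hasDerivAt.sub hlin).prodMk (hh'.hasDerivAt.sub_const hd0))

lemma norm_deriv_freeFlightDeviation_le (hsol : IsGlobalSolution a μ b D h0 hd0 ξ0 ξd0 h ξ)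
    {t L M : ℝ} (ht : 0 ≤ t) (hL : 0 ≤ L) (hM : 0 ≤ M) (hμ : |μ| ≤ 1)
    (hb : |b (ξ t)| ≤ L * |ξ t|) (hD : |D (h t) (ξ t)| ≤ M) :
    ‖deriv (freeFlightDeviation h0 hd0 h ξ) t‖ ≤
      (1 + (1 + |a|) * L + M) * ‖freeFlightDeviation h0 hd0 h ξ t‖ + |μ| * M * |hd0| := by
  set N := ‖freeFlightDeviation h0 hd0 h ξ t‖
  have hN : 0 ≤ N := norm_nonneg _
  have hξN : |ξ t| ≤ N := (norm_fst_le (freeFlightDeviation h0 hd0 h ξ t).1).trans (norm_fst_le _)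
  have hξ'N : |deriv ξ t| ≤ N :=
    (norm_snd_le (freeFlightDeviation h0 hd0 h ξ t).1).trans (norm_fst_le _)
  have hh'N : |deriv h t - hd0| ≤ N :=
    (norm_snd_le (freeFlightDeviation h0 hd0 h ξ t).2).trans (norm_snd_le _)
  have hbN : |b (ξ t)| ≤ L * N := hb.trans (mul_le_mul_of_nonneg_left hξN hL)
  have hh' : |deriv h t| ≤ N + |hd0| := by
    simpa using (abs_add_le (deriv h t - hd0) hd0).trans (add_le_add hh'N le_rfl)
  have hdrag : |μ * D (h t) (ξ t) * deriv h t| ≤ M * N + |μ| * M * |hd0| := by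
    rw [abs_mul, abs_mul]
    calc |μ| * |D (h t) (ξ t)| * |deriv h t| ≤ |μ| * M * (N + |hd0|) := by gcongr
      _ ≤ M * N + |μ| * M * |hd0| := by nlinarith [abs_nonneg μ, mul_nonneg hM hN]
  have hh'' : |deriv (deriv h) t| ≤ L * N + (M * N + |μ| * M * |hd0|) := by
    rw [hsol.2.2.2.1 t ht, sub_eq_add_neg, ← neg_add, abs_neg]
    exact (abs_add_le _ _).trans (add_le_add hbN hdrag)
  have hξ'' : |deriv (deriv ξ) t| ≤ |deriv (deriv h) t| + |a| * (L * N) := by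
    rw [show deriv (deriv ξ) t = deriv (deriv h) t - a * b (ξ t) by
      linarith [hsol.2.2.1 t ht]]
    exact (abs_sub _ _).trans (add_le_add le_rfl (by rw [abs_mul]; gcongr))
  have hK : (1 + (1 + |a|) * L + M) * N = N + L * N + |a| * (L * N) + M * N := by ring
  have hLN := mul_nonneg hL hN
  have haLN := mul_nonneg (abs_nonneg a) hLN
  have hMN := mul_nonneg hM hN
  have hforcing := mul_nonneg (mul_nonneg (abs_nonneg μ) hM) (abs_nonneg hd0)
  rw [(hsol.hasDerivAt_freeFlightDeviation ht).deriv]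
  simp only [Prod.norm_mk, Real.norm_eq_abs]
  refine max_le (max_le ?_ ?_) (max_le ?_ ?_) <;> linarith

lemma norm_freeFlightDeviation_le_gronwallBound (hsol : IsGlobalSolution a μ b D h0 hd0 0 0 h ξ)
    {T ρ L M ε : ℝ} (hL : 0 ≤ L) (hM : 0 ≤ M) (hμ : |μ| ≤ 1) (hε : |μ| * M * |hd0| < ε)
    (hb : ∀ y, |y| ≤ ρ → |b y| ≤ L * |y|)
    (hD : ∀ t ∈ Icc 0 T, ∀ x y, |x - (h0 + hd0 * t)| ≤ ρ → |y| ≤ ρ → |D x y| ≤ M)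
    (hρ : gronwallBound 0 (1 + (1 + |a|) * L + M) ε T ≤ ρ) :
    ∀ t ∈ Icc 0 T, ‖freeFlightDeviation h0 hd0 h ξ t‖ ≤
      gronwallBound 0 (1 + (1 + |a|) * L + M) ε t := by
  set K := 1 + (1 + |a|) * L + M
  have hε0 : 0 ≤ ε := (by positivity : 0 ≤ |μ| * M * |hd0|).trans hε.le
  have hdev : ∀ t ∈ Ico 0 T, HasDerivAt (freeFlightDeviation h0 hd0 h ξ)
      (deriv (freeFlightDeviation h0 hd0 h ξ) t) t := fun t ht =>
    (hsol.hasDerivAt_freeFlightDeviation ht.1).differentiableAt.hasDerivAt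
  refine image_norm_le_of_norm_deriv_right_lt_deriv_boundary
    (fun t ht => (hsol.hasDerivAt_freeFlightDeviation ht.1).continuousAt.continuousWithinAt)
    (fun t ht => (hdev t ht).hasDerivWithinAt) ?_ (hasDerivAt_gronwallBound 0 K ε) ?_
  · rw [gronwallBound_x0, hsol.freeFlightDeviation_zero, norm_zero]
  -- On the barrier the deviation is at most `ρ`, which is where `b` and `𝒟` are controlled.
  intro t ht hbarrier
  have hρt : ‖freeFlightDeviation h0 hd0 h ξ t‖ ≤ ρ :=
    hbarrier.le.trans ((gronwallBound_mono le_rfl hε0 (by positivity) ht.2.le).trans hρ)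
  have hξ : |ξ t| ≤ ρ :=
    ((norm_fst_le (freeFlightDeviation h0 hd0 h ξ t).1).trans (norm_fst_le _)).trans hρt
  have hh : |h t - (h0 + hd0 * t)| ≤ ρ :=
    ((norm_fst_le (freeFlightDeviation h0 hd0 h ξ t).2).trans (norm_snd_le _)).trans hρt
  calc ‖deriv (freeFlightDeviation h0 hd0 h ξ) t‖
      ≤ K * ‖freeFlightDeviation h0 hd0 h ξ t‖ + |μ| * M * |hd0| :=
        hsol.norm_deriv_freeFlightDeviation_le ht.1 hL hM hμ (hb _ hξ)
          (hD t (Ico_subset_Icc_self ht) _ _ hh hξ)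
    _ < K * gronwallBound 0 K ε t + ε := by rw [hbarrier]; linarith

end IsGlobalSolution

lemma eventually_forall_norm_freeFlightDeviation_lt {a h0 hd0 T η : ℝ} {b : ℝ → ℝ}
    {D : ℝ → ℝ → ℝ} (hB1 : HypB1 b) (hb0 : b 0 = 0) (hD1 : HypD1 D) (hhd0 : hd0 ≤ 0)
    (hT : 0 < h0 + hd0 * T) (hη : 0 < η) :
    ∀ᶠ μ in 𝓝 0, ∀ h ξ, IsGlobalSolution a μ b D h0 hd0 0 0 h ξ →
      ∀ t ∈ Icc 0 T, ‖freeFlightDeviation h0 hd0 h ξ t‖ < η := by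
  obtain ⟨r, hr, L, hL, hb⟩ := exists_norm_le_mul_norm_of_locallyLipschitz hB1 hb0
  set δ := h0 + hd0 * T
  set ρ := min η (min r (δ / 2))
  have hρ : 0 < ρ := lt_min hη (lt_min hr (half_pos hT))
  obtain ⟨M₀, hM₀⟩ := (isCompact_Icc.prod isCompact_Icc).exists_bound_of_continuousOn
    (hD1.continuousOn.mono fun q hq => (half_pos hT).trans_le hq.1.1 :
      ContinuousOn _ (Icc (δ / 2) (h0 + δ) ×ˢ Icc (-r) r))
  set M := max M₀ 0
  have hD : ∀ t ∈ Icc 0 T, ∀ x y, |x - (h0 + hd0 * t)| ≤ ρ → |y| ≤ ρ → |D x y| ≤ M := by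
    intro t ht x y hx hy
    have hρr : ρ ≤ r := (min_le_right _ _).trans (min_le_left _ _)
    have hρδ : ρ ≤ δ / 2 := (min_le_right _ _).trans (min_le_right _ _)
    have hlin : δ ≤ h0 + hd0 * t ∧ h0 + hd0 * t ≤ h0 := ⟨by nlinarith [ht.2], by nlinarith [ht.1]⟩
    refine (hM₀ (x, y) ⟨⟨?_, ?_⟩, abs_le.1 (hy.trans hρr)⟩).trans (le_max_left _ _)
    all_goals linarith [abs_le.1 hx]
  set K := 1 + (1 + |a|) * L + M
  have hgronwall : Tendsto (fun ε => gronwallBound 0 K ε T) (𝓝[>] 0) (𝓝 0) :=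
    ((gronwallBound_continuous_ε 0 K T).tendsto' 0 0 (gronwallBound_ε0_δ0 K T)).mono_left
      nhdsWithin_le_nhds
  obtain ⟨ε, hερ, hε⟩ : ∃ ε, gronwallBound 0 K ε T < ρ ∧ ε ∈ Ioi 0 :=
    ((hgronwall.eventually (gt_mem_nhds hρ)).and self_mem_nhdsWithin).exists
  have habs : Tendsto (fun μ : ℝ => |μ|) (𝓝 0) (𝓝 0) := continuous_abs.tendsto' 0 0 abs_zero
  filter_upwards [habs.eventually (ge_mem_nhds one_pos),
    (by simpa using (habs.mul_const M).mul_const |hd0| :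
      Tendsto (fun μ : ℝ => |μ| * M * |hd0|) (𝓝 0) (𝓝 0)).eventually (gt_mem_nhds hε)]
    with μ hμ1 hμε h ξ hsol t ht
  have hbρ : ∀ y, |y| ≤ ρ → |b y| ≤ L * |y| := fun y hy =>
    hb y (hy.trans ((min_le_right _ _).trans (min_le_left _ _)))
  calc ‖freeFlightDeviation h0 hd0 h ξ t‖ ≤ gronwallBound 0 K ε t :=
        hsol.norm_freeFlightDeviation_le_gronwallBound hL (le_max_right _ _) hμ1 hμε hbρ hD
          hερ.le t ht
    _ ≤ gronwallBound 0 K ε T := gronwallBound_mono le_rfl (le_of_lt hε) (by positivity) ht.2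
    _ < ρ := hερ
    _ ≤ η := min_le_left _ _

theorem limit_identification_before_impact_general
    (a h0 hd0 : ℝ) (b : ℝ → ℝ) (D : ℝ → ℝ → ℝ)
    (μseq : ℕ → ℝ) (h ξ : ℕ → ℝ → ℝ) (hl ξl : ℝ → ℝ)
    (hh0 : 0 < h0) (hhd0 : hd0 < 0)
    (hb0 : b 0 = 0)
    (hB1 : HypB1 b)
    (hD1 : HypD1 D)
    (hμ0 : Tendsto μseq atTop (nhds 0))
    (hsol : ∀ n, IsGlobalSolution a (μseq n) b D h0 hd0 0 0 (h n) (ξ n))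
    (hconvh : ∀ K : Set ℝ, IsCompact K → K ⊆ Set.Ici 0 →
      TendstoUniformlyOn (fun n t => h n t) hl atTop K)
    (hconvξ : ∀ K : Set ℝ, IsCompact K → K ⊆ Set.Ici 0 →
      TendstoUniformlyOn (fun n t => ξ n t) ξl atTop K) :
    ∀ t ∈ Set.Icc (0:ℝ) (-h0 / hd0), hl t = h0 + hd0 * t ∧ ξl t = 0 := by
  have ht₀ : 0 < -h0 / hd0 := div_pos_of_neg_of_neg (neg_neg_of_pos hh0) hhd0
  have hbefore : EqOn (fun t => (hl t, ξl t)) (fun t => (h0 + hd0 * t, 0)) (Ico 0 (-h0 / hd0)) := by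
    intro t ht
    have hpos : 0 < h0 + hd0 * t := by linarith [(lt_div_iff_of_neg hhd0).1 ht.2]
    have hdev : Tendsto (fun n => freeFlightDeviation h0 hd0 (h n) (ξ n) t) atTop (𝓝 0) :=
      Metric.tendsto_nhds.2 fun η hη => by
        simpa only [dist_zero_right] using (hμ0.eventually
          (eventually_forall_norm_freeFlightDeviation_lt hB1 hb0 hD1 hhd0.le hpos hη)).mono
          fun n hn => hn _ _ (hsol n) t ⟨ht.1, le_rfl⟩
    have hsingle : {t} ⊆ Ici (0:ℝ) := singleton_subset_iff.2 ht.1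
    exact Prod.ext
      (tendsto_nhds_unique ((hconvh _ isCompact_singleton hsingle).tendsto_at rfl)
        (tendsto_sub_nhds_zero_iff.1 hdev.snd_nhds.fst_nhds))
      (tendsto_nhds_unique ((hconvξ _ isCompact_singleton hsingle).tendsto_at rfl)
        hdev.fst_nhds.fst_nhds)
  have hcont : ContinuousOn (fun t => (hl t, ξl t)) (Icc 0 (-h0 / hd0)) :=
    ((hconvh _ isCompact_Icc Icc_subset_Ici_self).continuousOn (Frequently.of_forall fun n =>
      (hsol n).continuousOn_h.mono Icc_subset_Ici_self)).prodMk
    ((hconvξ _ isCompact_Icc Icc_subset_Ici_self).continuousOn (Frequently.of_forall fun n =>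
      (hsol n).continuousOn_ξ.mono Icc_subset_Ici_self))
  intro t ht
  exact Prod.ext_iff.1 (hbefore.of_subset_closure hcont (by fun_prop) Ico_subset_Icc_self
    (closure_Ico ht₀.ne).ge ht)

/-- Lemma 3.6(ii): identification of the vanishing-viscosity limit before impact
for `ḣ₀ < 0`: the limit is `h(t) = h₀ + ḣ₀·t`, `ξ(t) = 0` on `[0, t₀]`,
where `t₀ = −h₀/ḣ₀`. -/
theorem limit_identification_before_impact
    (a h0 hd0 c α : ℝ) (b : ℝ → ℝ) (D : ℝ → ℝ → ℝ)
    (μseq : ℕ → ℝ) (h ξ : ℕ → ℝ → ℝ) (hl ξl : ℝ → ℝ)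
    (ha : 0 < a) (hh0 : 0 < h0) (hhd0 : hd0 < 0)
    (hb0 : b 0 = 0)
    (hB1 : HypB1 b) (hB2 : HypB2 b)
    (hDpos : HypDpos D) (hD1 : HypD1 D) (hD2 : HypD2 D c α)
    (hμpos : ∀ n, 0 < μseq n) (hμ0 : Tendsto μseq atTop (nhds 0))
    (hsol : ∀ n, IsGlobalSolution a (μseq n) b D h0 hd0 0 0 (h n) (ξ n))
    (hconvh : ∀ K : Set ℝ, IsCompact K → K ⊆ Set.Ici 0 →
      TendstoUniformlyOn (fun n t => h n t) hl atTop K)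
    (hconvξ : ∀ K : Set ℝ, IsCompact K → K ⊆ Set.Ici 0 →
      TendstoUniformlyOn (fun n t => ξ n t) ξl atTop K) :
    ∀ t ∈ Set.Icc (0:ℝ) (-h0 / hd0), hl t = h0 + hd0 * t ∧ ξl t = 0 :=
  limit_identification_before_impact_general a h0 hd0 b D μseq h ξ hl ξl hh0 hhd0 hb0 hB1 hD1 hμ0
    hsol hconvh hconvξ
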